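/- arXiv:1801.06915 — 2 statements merged into one kernel-verified Lean document; each statement's English description precedes it below -/
import Mathlib

section
/- Let k be an algebraically closed field of characteristic 2 and let n ≥ 2. Then the identity matrix 1 belongs to sp(2n,k), the center of sp(2n,k) is exactly k·1 (one-dimensional), and 1 belongs to the subalgebra 𝔫 = ⁅𝔪,𝔪⁆ if and only if n is even. In particular, the center of sp(2n,k) is contained in 𝔫 if and only if n is even. -/
open Matrix

noncomputable section

/-- The matrix of the standard symplectic form: `[[0, Iₙ], [−Iₙ, 0]]`. -/
def spJ (k : Type*) [Field k] (n : ℕ) :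
    Matrix (Fin n ⊕ Fin n) (Fin n ⊕ Fin n) k :=
  Matrix.fromBlocks 0 1 (-1) 0

/-- The symplectic Lie algebra `sp(2n,k) = {x : xᵀJ + Jx = 0}`, as a subset of the
matrix Lie algebra (with bracket `⁅x,y⁆ = x*y - y*x`). -/
def spSet (k : Type*) [Field k] (n : ℕ) :
    Set (Matrix (Fin n ⊕ Fin n) (Fin n ⊕ Fin n) k) :=
  {x | xᵀ * spJ k n + spJ k n * x = 0}

/-- The symplectic group `Sp(2n,k) = {g : gᵀJg = J}`. -/
def SpGroup (k : Type*) [Field k] (n : ℕ) :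
    Set (Matrix (Fin n ⊕ Fin n) (Fin n ⊕ Fin n) k) :=
  {g | gᵀ * spJ k n * g = spJ k n}

/-- The derived subalgebra `𝔪 = ⁅sp(2n,k), sp(2n,k)⁆`, i.e. the span of all brackets of
pairs of elements of `sp(2n,k)`. -/
def spm (k : Type*) [Field k] (n : ℕ) :
    Submodule k (Matrix (Fin n ⊕ Fin n) (Fin n ⊕ Fin n) k) :=
  Submodule.span k {m | ∃ x ∈ spSet k n, ∃ y ∈ spSet k n, m = x * y - y * x}

/-- The second derived subalgebra `𝔫 = ⁅𝔪, 𝔪⁆`. -/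
def spn (k : Type*) [Field k] (n : ℕ) :
    Submodule k (Matrix (Fin n ⊕ Fin n) (Fin n ⊕ Fin n) k) :=
  Submodule.span k {m | ∃ x ∈ spm k n, ∃ y ∈ spm k n, m = x * y - y * x}

/-- The center `{x ∈ sp(2n,k) : ⁅x,y⁆ = 0 for all y ∈ sp(2n,k)}`. -/
def spCenter (k : Type*) [Field k] (n : ℕ) :
    Set (Matrix (Fin n ⊕ Fin n) (Fin n ⊕ Fin n) k) :=
  {x ∈ spSet k n | ∀ y ∈ spSet k n, x * y - y * x = 0}

/-! In characteristic 2 the identity lies in `sp(2n,k)` because `2J = 0`.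

The elements `[[0,1],[0,0]]`, `[[0,0],[1,0]]` and `[[A,0],[0,-Aᵀ]]` of `sp(2n,k)` generate the whole
matrix algebra, so anything commuting with `sp(2n,k)` is a scalar.

A bracket of two elements of `sp(2n,k)` has off-diagonal blocks of the form `M + Mᵀ`, and in
characteristic 2 we have `tr((M + Mᵀ)(N + Nᵀ)) = 2 (tr(MN) + tr(MNᵀ)) = 0`. Hence the trace of the
upper-left block vanishes on `𝔫`, whereas it equals `n` on `1`. Conversely, for `n` even pick
`S = A + Aᵀ` with `S² = 1` (the matrix swapping the two halves of `Fin n`): then `[[0,S],[0,0]]` and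
`[[0,0],[S,0]]` lie in `𝔪`, and their bracket is `diag(S², -S²) = 1`. -/

theorem Matrix.neg_eq_of_charTwo {ι R : Type*} [Ring R] [CharP R 2] (M : Matrix ι ι R) :
    -M = M := by
  ext
  exact CharTwo.neg_eq _

theorem Matrix.trace_add_transpose_mul_add_transpose {ι R : Type*} [Fintype ι] [CommRing R]
    [CharP R 2] (M N : Matrix ι ι R) : trace ((M + Mᵀ) * (N + Nᵀ)) = 0 := by
  have hMN : trace (Mᵀ * Nᵀ) = trace (M * N) := trace_transpose_mul M N
  have hMtN : trace (Mᵀ * N) = trace (M * Nᵀ) := by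
    rw [← trace_transpose, transpose_mul, transpose_transpose, trace_mul_comm]
  simp only [add_mul, mul_add, trace_add, hMN, hMtN]
  linear_combination CharTwo.add_self_eq_zero (trace (M * N) + trace (M * Nᵀ))

theorem exists_add_transpose_mul_self_eq_one (R : Type*) [Semiring R] (m : ℕ) :
    ∃ A : Matrix (Fin (m + m)) (Fin (m + m)) R, (A + Aᵀ) * (A + Aᵀ) = 1 := by
  let e : Fin (m + m) ≃ Fin m ⊕ Fin m := finSumFinEquiv.symm
  refine ⟨(fromBlocks 0 1 0 0 : Matrix (Fin m ⊕ Fin m) (Fin m ⊕ Fin m) R).submatrix e e, ?_⟩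
  have hsum : ∀ F : Matrix (Fin m ⊕ Fin m) (Fin m ⊕ Fin m) R,
      F.submatrix e e + (F.submatrix e e)ᵀ = (F + Fᵀ).submatrix e e := fun _ => rfl
  rw [hsum, submatrix_mul_equiv, fromBlocks_transpose, fromBlocks_add, fromBlocks_multiply,
    ← submatrix_one_equiv e]
  simp [fromBlocks_one]

section anyChar

variable {k : Type*} [Field k] {n : ℕ}

theorem fromBlocks_mem_spSet_iff (A B C D : Matrix (Fin n) (Fin n) k) :
    fromBlocks A B C D ∈ spSet k n ↔ Bᵀ = B ∧ Cᵀ = C ∧ D = -Aᵀ := by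
  rw [spSet, Set.mem_ofPred_eq, spJ, fromBlocks_transpose, fromBlocks_multiply,
    fromBlocks_multiply, fromBlocks_add, ← fromBlocks_zero, fromBlocks_inj]
  simp only [Matrix.mul_zero, Matrix.zero_mul, Matrix.mul_one, Matrix.one_mul,
    Matrix.mul_neg, Matrix.neg_mul, zero_add, add_zero]
  constructor
  · rintro ⟨hA, hB, -, hC⟩
    exact ⟨add_neg_eq_zero.mp hC, neg_add_eq_zero.mp hA, eq_neg_of_add_eq_zero_right hB⟩
  · rintro ⟨hB, hC, rfl⟩
    simp [hB, hC]

theorem exists_eq_fromBlocks_of_mem_spSet {x : Matrix (Fin n ⊕ Fin n) (Fin n ⊕ Fin n) k}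
    (hx : x ∈ spSet k n) :
    ∃ A B C : Matrix (Fin n) (Fin n) k, Bᵀ = B ∧ Cᵀ = C ∧ x = fromBlocks A B C (-Aᵀ) := by
  rw [← fromBlocks_toBlocks x, fromBlocks_mem_spSet_iff] at hx
  obtain ⟨hB, hC, hD⟩ := hx
  exact ⟨_, _, _, hB, hC, by rw [← hD, fromBlocks_toBlocks]⟩

theorem fromBlocks_neg_transpose_mem_spSet (A : Matrix (Fin n) (Fin n) k) :
    fromBlocks A 0 0 (-Aᵀ) ∈ spSet k n :=
  (fromBlocks_mem_spSet_iff _ _ _ _).mpr ⟨transpose_zero, transpose_zero, rfl⟩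

theorem fromBlocks_zero_one_zero_zero_mem_spSet :
    fromBlocks 0 (1 : Matrix (Fin n) (Fin n) k) 0 0 ∈ spSet k n :=
  (fromBlocks_mem_spSet_iff _ _ _ _).mpr ⟨transpose_one, transpose_zero, by simp⟩

theorem fromBlocks_zero_zero_one_zero_mem_spSet :
    fromBlocks 0 0 (1 : Matrix (Fin n) (Fin n) k) 0 ∈ spSet k n :=
  (fromBlocks_mem_spSet_iff _ _ _ _).mpr ⟨transpose_zero, transpose_one, by simp⟩

theorem adjoin_spSet_eq_top : Algebra.adjoin k (spSet k n) = ⊤ := by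
  set S := Algebra.adjoin k (spSet k n)
  have hsp : ∀ {x}, x ∈ spSet k n → x ∈ S := fun hx => Algebra.subset_adjoin hx
  have h₁₁ : ∀ A, fromBlocks A 0 0 0 ∈ S := fun A => by
    have h := S.mul_mem (S.mul_mem (hsp fromBlocks_zero_one_zero_zero_mem_spSet)
      (hsp fromBlocks_zero_zero_one_zero_mem_spSet)) (hsp (fromBlocks_neg_transpose_mem_spSet A))
    simpa [fromBlocks_multiply] using h
  have h₁₂ : ∀ B, fromBlocks 0 B 0 0 ∈ S := fun B => by
    simpa [fromBlocks_multiply] using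
      S.mul_mem (h₁₁ B) (hsp fromBlocks_zero_one_zero_zero_mem_spSet)
  have h₂₁ : ∀ C, fromBlocks 0 0 C 0 ∈ S := fun C => by
    simpa [fromBlocks_multiply] using
      S.mul_mem (hsp fromBlocks_zero_zero_one_zero_mem_spSet) (h₁₁ C)
  have h₂₂ : ∀ D, fromBlocks 0 0 0 D ∈ S := fun D => by
    simpa [fromBlocks_multiply] using
      S.mul_mem (hsp fromBlocks_zero_zero_one_zero_mem_spSet) (h₁₂ D)
  refine eq_top_iff.mpr fun x _ => ?_
  rw [← fromBlocks_toBlocks x]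
  have h := S.add_mem (S.add_mem (h₁₁ x.toBlocks₁₁) (h₁₂ x.toBlocks₁₂))
    (S.add_mem (h₂₁ x.toBlocks₂₁) (h₂₂ x.toBlocks₂₂))
  simpa [fromBlocks_add] using h

theorem exists_smul_one_eq_of_mem_spCenter {x : Matrix (Fin n ⊕ Fin n) (Fin n ⊕ Fin n) k}
    (hx : x ∈ spCenter k n) : ∃ c : k, c • 1 = x := by
  have hcomm : ∀ y, Commute x y := fun y =>
    Algebra.commute_of_mem_adjoin_of_forall_mem_commute
      (adjoin_spSet_eq_top (k := k) ▸ Algebra.mem_top) fun z hz => sub_eq_zero.mp (hx.2 z hz)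
  obtain ⟨c, hc⟩ := mem_range_scalar_of_commute_single fun a b _ => (hcomm (single a b 1)).symm
  exact ⟨c, by rw [← hc, scalar_apply, smul_one_eq_diagonal]⟩

variable (k n) in
def symmetrizedOffDiag : Submodule k (Matrix (Fin n ⊕ Fin n) (Fin n ⊕ Fin n) k) where
  carrier := {x | ∃ A M N D : Matrix (Fin n) (Fin n) k, x = fromBlocks A (M + Mᵀ) (N + Nᵀ) D}
  add_mem' := by
    rintro _ _ ⟨A, M, N, D, rfl⟩ ⟨A', M', N', D', rfl⟩
    exact ⟨A + A', M + M', N + N', D + D', by simp only [fromBlocks_add, transpose_add,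
      add_add_add_comm]⟩
  zero_mem' := ⟨0, 0, 0, 0, by simp⟩
  smul_mem' := by
    rintro c _ ⟨A, M, N, D, rfl⟩
    exact ⟨c • A, c • M, c • N, c • D, by simp only [fromBlocks_smul, transpose_smul, smul_add]⟩

theorem bracket_mem_symmetrizedOffDiag {x y : Matrix (Fin n ⊕ Fin n) (Fin n ⊕ Fin n) k}
    (hx : x ∈ spSet k n) (hy : y ∈ spSet k n) : x * y - y * x ∈ symmetrizedOffDiag k n := by
  obtain ⟨A, B, C, hB, hC, rfl⟩ := exists_eq_fromBlocks_of_mem_spSet hx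
  obtain ⟨A', B', C', hB', hC', rfl⟩ := exists_eq_fromBlocks_of_mem_spSet hy
  rw [fromBlocks_multiply, fromBlocks_multiply, sub_eq_add_neg, fromBlocks_neg, fromBlocks_add]
  refine ⟨_, A * B' - B * A'ᵀ, C * A' - Aᵀ * C', _, fromBlocks_inj.mpr ⟨rfl, ?_, ?_, rfl⟩⟩ <;>
  · simp only [transpose_sub, transpose_mul, transpose_transpose, hB, hC, hB', hC',
      Matrix.mul_neg, Matrix.neg_mul]
    abel

theorem spm_le_symmetrizedOffDiag : spm k n ≤ symmetrizedOffDiag k n :=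
  Submodule.span_le.mpr fun _ ⟨_, hx, _, hy, h⟩ => h ▸ bracket_mem_symmetrizedOffDiag hx hy

theorem fromBlocks_zero_add_transpose_zero_zero_mem_spm (A : Matrix (Fin n) (Fin n) k) :
    fromBlocks 0 (A + Aᵀ) 0 0 ∈ spm k n :=
  Submodule.subset_span ⟨_, fromBlocks_neg_transpose_mem_spSet A, _,
    fromBlocks_zero_one_zero_zero_mem_spSet,
    by simp [fromBlocks_multiply, sub_eq_add_neg, fromBlocks_neg, fromBlocks_add]⟩

theorem fromBlocks_zero_zero_add_transpose_zero_mem_spm (A : Matrix (Fin n) (Fin n) k) :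
    fromBlocks 0 0 (A + Aᵀ) 0 ∈ spm k n :=
  Submodule.subset_span ⟨_, fromBlocks_zero_zero_one_zero_mem_spSet, _,
    fromBlocks_neg_transpose_mem_spSet A,
    by simp [fromBlocks_multiply, sub_eq_add_neg, fromBlocks_neg, fromBlocks_add]⟩

theorem fromBlocks_add_transpose_mul_self_mem_spn (A : Matrix (Fin n) (Fin n) k) :
    fromBlocks ((A + Aᵀ) * (A + Aᵀ)) 0 0 (-((A + Aᵀ) * (A + Aᵀ))) ∈ spn k n :=
  Submodule.subset_span ⟨_, fromBlocks_zero_add_transpose_zero_zero_mem_spm A, _,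
    fromBlocks_zero_zero_add_transpose_zero_mem_spm A,
    by simp [fromBlocks_multiply, sub_eq_add_neg, fromBlocks_neg, fromBlocks_add]⟩

variable (k n) in
@[simps]
def upperLeftTrace : Matrix (Fin n ⊕ Fin n) (Fin n ⊕ Fin n) k →ₗ[k] k where
  toFun x := trace x.toBlocks₁₁
  map_add' x y := trace_add x.toBlocks₁₁ y.toBlocks₁₁
  map_smul' c x := trace_smul c x.toBlocks₁₁

end anyChar

section charTwo

variable {k : Type*} [Field k] [CharP k 2] {n : ℕ}

theorem upperLeftTrace_bracket_eq_zero {u v : Matrix (Fin n ⊕ Fin n) (Fin n ⊕ Fin n) k}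
    (hu : u ∈ symmetrizedOffDiag k n) (hv : v ∈ symmetrizedOffDiag k n) :
    upperLeftTrace k n (u * v - v * u) = 0 := by
  obtain ⟨A, M, N, D, rfl⟩ := hu
  obtain ⟨A', M', N', D', rfl⟩ := hv
  rw [upperLeftTrace_apply, fromBlocks_multiply, fromBlocks_multiply,
    sub_eq_add_neg, fromBlocks_neg, fromBlocks_add, toBlocks_fromBlocks₁₁]
  simp only [trace_add, trace_neg, trace_add_transpose_mul_add_transpose, trace_mul_comm A A']
  ring

theorem spn_le_ker_upperLeftTrace : spn k n ≤ LinearMap.ker (upperLeftTrace k n) :=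
  Submodule.span_le.mpr fun _ ⟨_, hu, _, hv, h⟩ => h ▸ upperLeftTrace_bracket_eq_zero
    (spm_le_symmetrizedOffDiag hu) (spm_le_symmetrizedOffDiag hv)

theorem one_mem_spn_iff : (1 : Matrix (Fin n ⊕ Fin n) (Fin n ⊕ Fin n) k) ∈ spn k n ↔ Even n := by
  constructor
  · intro h
    have h0 : upperLeftTrace k n 1 = 0 := spn_le_ker_upperLeftTrace h
    rw [upperLeftTrace_apply, ← fromBlocks_one, toBlocks_fromBlocks₁₁,
      trace_one, Fintype.card_fin] at h0
    exact even_iff_two_dvd.mpr ((CharP.cast_eq_zero_iff k 2 n).mp h0)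
  · rintro ⟨m, rfl⟩
    obtain ⟨A, hA⟩ := exists_add_transpose_mul_self_eq_one k m
    simpa [hA, neg_eq_of_charTwo, fromBlocks_one] using
      fromBlocks_add_transpose_mul_self_mem_spn A

theorem one_mem_spSet : (1 : Matrix (Fin n ⊕ Fin n) (Fin n ⊕ Fin n) k) ∈ spSet k n := by
  rw [← fromBlocks_one, fromBlocks_mem_spSet_iff]
  exact ⟨transpose_zero, transpose_zero, by rw [transpose_one, neg_eq_of_charTwo]⟩

theorem spCenter_eq_range_smul_one :
    spCenter k n = Set.range fun c : k => c • (1 : Matrix (Fin n ⊕ Fin n) (Fin n ⊕ Fin n) k) := by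
  refine Set.Subset.antisymm (fun x hx => exists_smul_one_eq_of_mem_spCenter hx) ?_
  rintro _ ⟨c, rfl⟩
  refine ⟨?_, fun y _ => by simp⟩
  rw [spSet, Set.mem_ofPred_eq, transpose_smul, transpose_one, smul_mul, Matrix.one_mul,
    Matrix.mul_smul, Matrix.mul_one, ← add_smul, CharTwo.add_self_eq_zero, zero_smul]

end charTwo

theorem stmt15_general (k : Type*) [Field k] [CharP k 2] (n : ℕ) :
    (1 : Matrix (Fin n ⊕ Fin n) (Fin n ⊕ Fin n) k) ∈ spSet k n ∧
    spCenter k n =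
      Set.range (fun c : k => c • (1 : Matrix (Fin n ⊕ Fin n) (Fin n ⊕ Fin n) k)) ∧
    ((1 : Matrix (Fin n ⊕ Fin n) (Fin n ⊕ Fin n) k) ∈ spn k n ↔ Even n) ∧
    (spCenter k n ⊆ (spn k n : Set (Matrix (Fin n ⊕ Fin n) (Fin n ⊕ Fin n) k)) ↔
      Even n) := by
  refine ⟨one_mem_spSet (k := k), spCenter_eq_range_smul_one, one_mem_spn_iff, ?_⟩
  rw [spCenter_eq_range_smul_one, ← one_mem_spn_iff (k := k), Set.range_subset_iff]
  exact ⟨fun h => by simpa using h 1, fun h c => Submodule.smul_mem _ c h⟩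

/-- Let `k` be algebraically closed of characteristic 2 and `n ≥ 2`. Then the identity
matrix `1` belongs to `sp(2n,k)`, the center of `sp(2n,k)` is exactly `k·1`, and
`1 ∈ 𝔫` iff `n` is even. In particular the center of `sp(2n,k)` is contained in `𝔫`
iff `n` is even. -/
theorem stmt15 (k : Type*) [Field k] [IsAlgClosed k] [CharP k 2] (n : ℕ) (hn : 2 ≤ n) :
    (1 : Matrix (Fin n ⊕ Fin n) (Fin n ⊕ Fin n) k) ∈ spSet k n ∧
    spCenter k n =
      Set.range (fun c : k => c • (1 : Matrix (Fin n ⊕ Fin n) (Fin n ⊕ Fin n) k)) ∧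
    ((1 : Matrix (Fin n ⊕ Fin n) (Fin n ⊕ Fin n) k) ∈ spn k n ↔ Even n) ∧
    (spCenter k n ⊆ (spn k n : Set (Matrix (Fin n ⊕ Fin n) (Fin n ⊕ Fin n) k)) ↔
      Even n) :=
  stmt15_general k n
end
end

section
/- Let k be an algebraically closed field of characteristic 2, let n ≥ 2, and let x ∈ sp(2n,k) satisfy x·x = 0 (as matrices) and rank x = 1. Then there exists g ∈ Sp(2n,k) such that the element y := x + g x g⁻¹ satisfies y·y = 0 and rank y = 2. -/
-- Preamble shared by the symplectic-Lie-algebra statements.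
open Matrix

noncomputable section

/-! In characteristic 2 the matrix `J` is symmetric with `J² = 1`, so `x ∈ sp(2n,k)` says that
`Jx` is symmetric. A symmetric matrix of rank one over an algebraically closed field is `u uᵀ`,
hence `x = v vᵀ J`, and `g x g⁻¹ = w wᵀ J` with `w = g v` for every `g ∈ Sp(2n,k)`. The matrix
`y = v vᵀ J + w wᵀ J` squares to zero as soon as `vᵀ J w = 0` (the form `vᵀ J v` is alternating),
and has rank 2 as soon as `v, w` are linearly independent. If `v = (a, b)` with `bᵢ ≠ 0`, the
symplectic matrix `g = [[1, S], [0, 1]]` with `S = Eᵢⱼ + Eⱼᵢ`, `j ≠ i`, does the job: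
`vᵀ J g v = bᵀ S b = 2 bᵢ bⱼ = 0` and `g v - v = (S b, 0)` has `bᵢ` in position `j`. If `b = 0`,
conjugate by `J`, which swaps the two halves. -/

namespace Matrix

variable {k m ι p : Type*} [Field k] [Fintype ι]

theorem exists_eq_vecMulVec_of_rank_eq_one (A : Matrix m ι k) (h : A.rank = 1) :
    ∃ a b, A = vecMulVec a b := by
  classical
  obtain ⟨a, -, ha⟩ := finrank_eq_one_iff'.mp h
  choose c hc using fun j : ι => ha ⟨A *ᵥ Pi.single j 1, Pi.single j 1, rfl⟩
  refine ⟨a, c, ext fun i j => ?_⟩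
  have := congrFun (congrArg Subtype.val (hc j)) i
  simp only [SetLike.val_smul, Pi.smul_apply, smul_eq_mul, mulVec_single_one] at this
  rw [vecMulVec_apply, mul_comm, this, col_apply]

theorem exists_eq_vecMulVec_self_of_rank_eq_one [IsAlgClosed k] {S : Matrix ι ι k}
    (hS : S.IsSymm) (h : S.rank = 1) : ∃ u, S = vecMulVec u u := by
  obtain ⟨a, b, rfl⟩ := exists_eq_vecMulVec_of_rank_eq_one S h
  have ha : a ≠ 0 := by rintro rfl; simp at h
  obtain ⟨i, hi⟩ : ∃ i, a i ≠ 0 := Function.ne_iff.mp ha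
  obtain ⟨μ, hμ⟩ := IsAlgClosed.exists_pow_nat_eq (b i / a i) two_pos
  refine ⟨μ • a, ext fun r s => ?_⟩
  have hsymm : a s * b i = a i * b s := by
    simpa [vecMulVec_apply] using congrFun₂ hS i s
  simp only [vecMulVec_apply, Pi.smul_apply, smul_eq_mul]
  rw [show μ * a r * (μ * a s) = μ ^ 2 * a r * a s by ring, hμ]
  field_simp
  linear_combination -a r * hsymm

theorem rank_mul_eq_left_of_rank_eq_card [Fintype p] (A : Matrix m p k) (B : Matrix p ι k)
    (hB : B.rank = Fintype.card p) : (A * B).rank = A.rank := by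
  have hsurj : LinearMap.range B.mulVecLin = ⊤ :=
    Submodule.eq_top_of_finrank_eq (by rwa [Module.finrank_fintype_fun_eq_card])
  rw [rank, rank, mulVecLin_mul, LinearMap.range_comp_of_range_eq_top _ hsurj]

theorem rank_sum_vecMulVec_self [Fintype p] {v : p → ι → k} (hv : LinearIndependent k v) :
    (∑ i, vecMulVec (v i) (v i)).rank = Fintype.card p := by
  have hrank : (of v).rank = Fintype.card p := hv.rank_matrix
  have hgram : ∑ i, vecMulVec (v i) (v i) = (of v)ᵀ * of v := by
    ext r s; simp [mul_apply, vecMulVec_apply, Matrix.sum_apply]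
  rw [hgram, rank_mul_eq_left_of_rank_eq_card _ _ hrank, rank_transpose, hrank]

end Matrix

section Symplectic

variable {k : Type*} [Field k] {n : ℕ}

theorem spJ_mulVec_sumElim (a b : Fin n → k) :
    spJ k n *ᵥ Sum.elim a b = Sum.elim b (-a) := by
  simp [spJ, fromBlocks_mulVec, neg_mulVec]

theorem dotProduct_spJ_mulVec_self (v : Fin n ⊕ Fin n → k) : v ⬝ᵥ (spJ k n *ᵥ v) = 0 := by
  obtain ⟨a, b, rfl⟩ : ∃ a b, v = Sum.elim a b := ⟨_, _, (Sum.elim_comp_inl_inr v).symm⟩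
  simp [spJ_mulVec_sumElim, dotProduct_comm a]

theorem fromBlocks_one_zero_one_mem_SpGroup {S : Matrix (Fin n) (Fin n) k} (hS : S.IsSymm) :
    fromBlocks 1 S 0 1 ∈ SpGroup k n := by
  simp [SpGroup, spJ, fromBlocks_transpose, fromBlocks_multiply, hS.eq]

theorem mul_mem_SpGroup {g h : Matrix (Fin n ⊕ Fin n) (Fin n ⊕ Fin n) k} (hg : g ∈ SpGroup k n)
    (hh : h ∈ SpGroup k n) : g * h ∈ SpGroup k n := by
  simp only [SpGroup, Set.mem_ofPred_eq, transpose_mul] at *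
  rw [show hᵀ * gᵀ * spJ k n * (g * h) = hᵀ * (gᵀ * spJ k n * g) * h by noncomm_ring, hg, hh]

theorem dotProduct_spJ_mulVec_of_mem_SpGroup {g : Matrix (Fin n ⊕ Fin n) (Fin n ⊕ Fin n) k}
    (hg : g ∈ SpGroup k n) (v w : Fin n ⊕ Fin n → k) :
    (g *ᵥ v) ⬝ᵥ (spJ k n *ᵥ (g *ᵥ w)) = v ⬝ᵥ (spJ k n *ᵥ w) := by
  conv_rhs => rw [← show gᵀ * spJ k n * g = spJ k n from hg]
  rw [← mulVec_mulVec, ← mulVec_mulVec, dotProduct_mulVec v, vecMul_transpose]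

theorem vecMulVec_self_mul_spJ_mul_vecMulVec_self_mul_spJ (v w : Fin n ⊕ Fin n → k) :
    vecMulVec v v * spJ k n * (vecMulVec w w * spJ k n) =
      (v ⬝ᵥ (spJ k n *ᵥ w)) • (vecMulVec v w * spJ k n) := by
  rw [Matrix.mul_assoc, ← Matrix.mul_assoc (spJ k n), mul_vecMulVec, ← Matrix.mul_assoc,
    vecMulVec_mul_vecMulVec, vecMulVec_smul, Matrix.smul_mul]

end Symplectic

section CharTwo

variable {k : Type*} [Field k] [CharP k 2] {n : ℕ}

theorem spJ_eq_fromBlocks : spJ k n = fromBlocks 0 1 1 0 := by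
  rw [spJ, show (-1 : Matrix (Fin n) (Fin n) k) = 1 from ext fun _ _ => CharTwo.neg_eq _]

theorem spJ_transpose : (spJ k n)ᵀ = spJ k n := by
  simp [spJ_eq_fromBlocks, fromBlocks_transpose]

theorem spJ_mul_spJ : spJ k n * spJ k n = 1 := by
  simp [spJ_eq_fromBlocks, fromBlocks_multiply]

theorem spJ_mem_SpGroup : spJ k n ∈ SpGroup k n := by
  simp [SpGroup, spJ_transpose, spJ_mul_spJ]

theorem dotProduct_spJ_mulVec_comm (v w : Fin n ⊕ Fin n → k) :
    v ⬝ᵥ (spJ k n *ᵥ w) = w ⬝ᵥ (spJ k n *ᵥ v) := by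
  rw [dotProduct_mulVec, ← mulVec_transpose, spJ_transpose, dotProduct_comm]

theorem isUnit_det_of_mem_SpGroup {g : Matrix (Fin n ⊕ Fin n) (Fin n ⊕ Fin n) k}
    (hg : g ∈ SpGroup k n) : IsUnit g.det := by
  have hJ : (spJ k n).det * (spJ k n).det = 1 := by rw [← det_mul, spJ_mul_spJ, det_one]
  have h := congrArg det (show gᵀ * spJ k n * g = spJ k n from hg)
  rw [det_mul, det_mul, det_transpose] at h
  exact .of_mul_eq_one g.det <| by
    linear_combination (spJ k n).det * h - (g.det ^ 2 - 1) * hJ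

theorem spJ_mul_inv_of_mem_SpGroup {g : Matrix (Fin n ⊕ Fin n) (Fin n ⊕ Fin n) k}
    (hg : g ∈ SpGroup k n) : spJ k n * g⁻¹ = gᵀ * spJ k n := by
  conv_lhs => rw [← show gᵀ * spJ k n * g = spJ k n from hg]
  rw [Matrix.mul_assoc, mul_nonsing_inv _ (isUnit_det_of_mem_SpGroup hg), Matrix.mul_one]

theorem mul_vecMulVec_self_mul_spJ_mul_inv_of_mem_SpGroup
    {g : Matrix (Fin n ⊕ Fin n) (Fin n ⊕ Fin n) k} (hg : g ∈ SpGroup k n) (v : Fin n ⊕ Fin n → k) :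
    g * (vecMulVec v v * spJ k n) * g⁻¹ = vecMulVec (g *ᵥ v) (g *ᵥ v) * spJ k n := by
  rw [Matrix.mul_assoc, Matrix.mul_assoc, spJ_mul_inv_of_mem_SpGroup hg,
    ← Matrix.mul_assoc (vecMulVec v v), ← Matrix.mul_assoc, vecMulVec_mul, vecMul_transpose,
    mul_vecMulVec]

theorem exists_eq_vecMulVec_self_mul_spJ [IsAlgClosed k]
    {x : Matrix (Fin n ⊕ Fin n) (Fin n ⊕ Fin n) k} (hx : x ∈ spSet k n) (hrank : x.rank = 1) :
    ∃ v, x = vecMulVec v v * spJ k n := by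
  have hJ : IsUnit (spJ k n).det := isUnit_det_of_mem_SpGroup spJ_mem_SpGroup
  have hsymm : (spJ k n * x).IsSymm := by
    rw [IsSymm, transpose_mul, spJ_transpose, eq_neg_of_add_eq_zero_left hx]
    exact ext fun _ _ => CharTwo.neg_eq _
  obtain ⟨u, hu⟩ := exists_eq_vecMulVec_self_of_rank_eq_one hsymm
    (by rw [rank_mul_eq_right_of_isUnit_det _ _ hJ, hrank])
  refine ⟨spJ k n *ᵥ u, ?_⟩
  calc x = spJ k n * (spJ k n * x) := by rw [← Matrix.mul_assoc, spJ_mul_spJ, Matrix.one_mul]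
    _ = vecMulVec (spJ k n *ᵥ u) (spJ k n *ᵥ u) * spJ k n := by
      rw [hu, mul_vecMulVec, vecMulVec_mul, ← mulVec_transpose, spJ_transpose, mulVec_mulVec,
        spJ_mul_spJ, one_mulVec]

theorem vecMulVec_add_vecMulVec_mul_spJ_mul_self_eq_zero {v w : Fin n ⊕ Fin n → k}
    (h : v ⬝ᵥ (spJ k n *ᵥ w) = 0) :
    (vecMulVec v v * spJ k n + vecMulVec w w * spJ k n) *
      (vecMulVec v v * spJ k n + vecMulVec w w * spJ k n) = 0 := by
  simp only [add_mul, mul_add, vecMulVec_self_mul_spJ_mul_vecMulVec_self_mul_spJ,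
    dotProduct_spJ_mulVec_self, dotProduct_spJ_mulVec_comm w v, h, zero_smul, add_zero]

theorem rank_vecMulVec_add_vecMulVec_mul_spJ {v w : Fin n ⊕ Fin n → k}
    (h : LinearIndependent k ![v, w]) :
    (vecMulVec v v * spJ k n + vecMulVec w w * spJ k n).rank = 2 := by
  have hgram : ∑ i, vecMulVec (![v, w] i) (![v, w] i) = vecMulVec v v + vecMulVec w w := by
    simp [Fin.sum_univ_two]
  rw [← add_mul, rank_mul_eq_left_of_isUnit_det _ _ (isUnit_det_of_mem_SpGroup spJ_mem_SpGroup),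
    ← hgram, rank_sum_vecMulVec_self h, Fintype.card_fin]

theorem exists_mem_SpGroup_orthogonal_linearIndependent_sumElim (hn : 2 ≤ n) (a b : Fin n → k)
    {i : Fin n} (hi : b i ≠ 0) :
    ∃ g ∈ SpGroup k n, Sum.elim a b ⬝ᵥ (spJ k n *ᵥ (g *ᵥ Sum.elim a b)) = 0 ∧
      LinearIndependent k ![Sum.elim a b, g *ᵥ Sum.elim a b] := by
  obtain ⟨j, hji⟩ := Fintype.exists_ne_of_one_lt_card (by rw [Fintype.card_fin]; omega) i
  set S : Matrix (Fin n) (Fin n) k := single i j 1 + single j i 1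
  have hS : S.IsSymm := by simp [IsSymm, S, add_comm]
  have hgv : fromBlocks 1 S 0 1 *ᵥ Sum.elim a b = Sum.elim (a + S *ᵥ b) b := by
    simp [fromBlocks_mulVec]
  refine ⟨_, fromBlocks_one_zero_one_mem_SpGroup hS, ?_, ?_⟩
  · rw [hgv, spJ_mulVec_sumElim]
    simp [S, add_mulVec, dotProduct_comm a, single_mulVec_eq, mul_comm (b j),
      CharTwo.add_self_eq_zero]
  · rw [hgv, LinearIndependent.pair_iff]
    intro s t hst
    have h1 : s * b i + t * b i = 0 := by simpa using congrFun hst (Sum.inr i)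
    have h2 : s * a j + t * (a j + b i) = 0 := by
      simpa [S, add_mulVec, single_mulVec_eq, hji] using congrFun hst (Sum.inl j)
    have hsum : s + t = 0 :=
      (mul_eq_zero.mp (by linear_combination h1 : (s + t) * b i = 0)).resolve_right hi
    have ht : t = 0 :=
      (mul_eq_zero.mp (by linear_combination h2 - a j * hsum : t * b i = 0)).resolve_right hi
    exact ⟨by linear_combination hsum - ht, ht⟩

theorem exists_mem_SpGroup_orthogonal_linearIndependent (hn : 2 ≤ n) {v : Fin n ⊕ Fin n → k}
    (hv : v ≠ 0) :
    ∃ g ∈ SpGroup k n, v ⬝ᵥ (spJ k n *ᵥ (g *ᵥ v)) = 0 ∧ LinearIndependent k ![v, g *ᵥ v] := by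
  obtain ⟨a, b, rfl⟩ : ∃ a b, v = Sum.elim a b := ⟨_, _, (Sum.elim_comp_inl_inr v).symm⟩
  by_cases hb : b = 0
  · subst hb
    have ha : a ≠ 0 := by rintro rfl; exact hv Sum.elim_zero_zero
    obtain ⟨i, hi⟩ : ∃ i, a i ≠ 0 := Function.ne_iff.mp ha
    obtain ⟨g, hg, hortho, hli⟩ :=
      exists_mem_SpGroup_orthogonal_linearIndependent_sumElim hn 0 a hi
    have hv' : Sum.elim a 0 = spJ k n *ᵥ Sum.elim 0 a := by simp [spJ_mulVec_sumElim]
    have hgv : (spJ k n * g * spJ k n) *ᵥ (spJ k n *ᵥ Sum.elim 0 a) =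
        spJ k n *ᵥ (g *ᵥ Sum.elim 0 a) := by
      rw [mulVec_mulVec, Matrix.mul_assoc, spJ_mul_spJ, Matrix.mul_one, mulVec_mulVec]
    rw [hv']
    refine ⟨spJ k n * g * spJ k n,
      mul_mem_SpGroup (mul_mem_SpGroup spJ_mem_SpGroup hg) spJ_mem_SpGroup, ?_, ?_⟩
    · rw [hgv, dotProduct_spJ_mulVec_of_mem_SpGroup spJ_mem_SpGroup, hortho]
    · have hJ : LinearMap.ker (spJ k n).mulVecLin = ⊥ := LinearMap.ker_eq_bot.mpr <|
        mulVec_injective_of_isUnit (IsUnit.of_mul_eq_one _ spJ_mul_spJ)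
      have hmap : ![spJ k n *ᵥ Sum.elim 0 a, spJ k n *ᵥ (g *ᵥ Sum.elim 0 a)] =
          (spJ k n).mulVecLin ∘ ![Sum.elim 0 a, g *ᵥ Sum.elim 0 a] := by
        ext i : 1; fin_cases i <;> rfl
      rw [hgv, hmap]
      exact hli.map' _ hJ
  · obtain ⟨i, hi⟩ : ∃ i, b i ≠ 0 := Function.ne_iff.mp hb
    exact exists_mem_SpGroup_orthogonal_linearIndependent_sumElim hn a b hi

end CharTwo

theorem stmt16_general (k : Type*) [Field k] [IsAlgClosed k] [CharP k 2] (n : ℕ) (hn : 2 ≤ n)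
    (x : Matrix (Fin n ⊕ Fin n) (Fin n ⊕ Fin n) k)
    (hx : x ∈ spSet k n) (hrank : x.rank = 1) :
    ∃ g ∈ SpGroup k n,
      (x + g * x * g⁻¹) * (x + g * x * g⁻¹) = 0 ∧ (x + g * x * g⁻¹).rank = 2 := by
  obtain ⟨v, rfl⟩ := exists_eq_vecMulVec_self_mul_spJ hx hrank
  have hv : v ≠ 0 := by rintro rfl; simp at hrank
  obtain ⟨g, hg, hortho, hli⟩ := exists_mem_SpGroup_orthogonal_linearIndependent hn hv
  refine ⟨g, hg, ?_⟩
  rw [mul_vecMulVec_self_mul_spJ_mul_inv_of_mem_SpGroup hg]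
  exact ⟨vecMulVec_add_vecMulVec_mul_spJ_mul_self_eq_zero hortho,
    rank_vecMulVec_add_vecMulVec_mul_spJ hli⟩

/-- Let `k` be algebraically closed of characteristic 2, `n ≥ 2`, and let
`x ∈ sp(2n,k)` satisfy `x·x = 0` and `rank x = 1`. Then there is `g ∈ Sp(2n,k)` such
that `y := x + g x g⁻¹` satisfies `y·y = 0` and `rank y = 2`. -/
theorem stmt16 (k : Type*) [Field k] [IsAlgClosed k] [CharP k 2] (n : ℕ) (hn : 2 ≤ n)
    (x : Matrix (Fin n ⊕ Fin n) (Fin n ⊕ Fin n) k)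
    (hx : x ∈ spSet k n) (hx2 : x * x = 0) (hrank : x.rank = 1) :
    ∃ g ∈ SpGroup k n,
      (x + g * x * g⁻¹) * (x + g * x * g⁻¹) = 0 ∧ (x + g * x * g⁻¹).rank = 2 :=
  stmt16_general k n hn x hx hrank
end
end
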